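/- arXiv:2311.14723 — 3 statements merged into one kernel-verified Lean document; each statement's English description precedes it below -/
import Mathlib

section
/- Let n ≥ 1, d ≥ 2, and let V : Fin n → MvPolynomial (Fin n) ℂ be a polynomial map of degree ≤ d with V(0) = 0 and V'(0) = 0. Let ‖V‖ denote the maximum of the absolute values of all coefficients of the polynomials V i. Then there exists a function F : ℂ^n → ℂ^n, analytic on the open ball B = { y : ‖y‖_∞ < 1 / ((2n)^d · (1 + ‖V‖)) } (sup norm on ℂ^n), with F(0) = 0 and F(y) = y + V(F(y)) for every y ∈ B; in particular F(y) - V(F(y)) = y, so F is a local analytic inverse of x ↦ x - V(x). -/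
open MvPolynomial

/-- The maximum (supremum) of the absolute values of all coefficients of the
components of a polynomial map `V : ℂ^n → ℂ^n`. -/
noncomputable def coeffNorm {n : ℕ} (V : Fin n → MvPolynomial (Fin n) ℂ) : ℝ :=
  sSup {r : ℝ | ∃ (i : Fin n) (m : Fin n →₀ ℕ), r = ‖MvPolynomial.coeff m (V i)‖}

/-!
Let `r = 1 / ((2n)^d (1 + ‖V‖))`. Bounding each monomial of degree `k ∈ [2, d]` on the closed
ball of radius `2r`, and counting at most `n ^ k` such monomials, shows that there `V` is
Lipschitz with constant `1 - (1 + ‖V‖)⁻¹ ^ (d - 1) < 1` and `‖V x‖ ≤ r`. So for `‖y‖ < r` the map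
`x ↦ y + V x` is a contraction of that ball into its interior, with a unique fixed point `F y`.
Near any `y₀`, uniqueness makes `F` coincide with the local inverse of `x ↦ x - V x` at `F y₀`,
which is analytic because its derivative `1 - V'(F y₀)` is invertible: `‖V'(F y₀)‖` is at most
the Lipschitz constant.
-/

open Metric Filter Topology Finset
open scoped NNReal

section FixedPoint

variable {E : Type*} [NormedAddCommGroup E] {V : E → E} {s : Set E} {c : ℝ≥0}

theorem LipschitzOnWith.eq_of_eq_add_apply (hlip : LipschitzOnWith c V s) (hc : c < 1)
    {x x' y : E} (hx : x ∈ s) (hx' : x' ∈ s) (h : x = y + V x) (h' : x' = y + V x') :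
    x = x' := by
  have hle : ‖x - x'‖ ≤ c * ‖x - x'‖ := by
    calc ‖x - x'‖ = ‖V x - V x'‖ := by
          conv_lhs => rw [h, h', add_sub_add_left_eq_sub]
      _ ≤ c * ‖x - x'‖ := hlip.norm_sub_le hx hx'
  have : ‖x - x'‖ = 0 := by
    nlinarith [norm_nonneg (x - x'), (NNReal.coe_lt_coe.2 hc : (c : ℝ) < 1)]
  exact sub_eq_zero.1 (norm_eq_zero.1 this)

theorem LipschitzOnWith.exists_eq_add_apply [CompleteSpace E] (hlip : LipschitzOnWith c V s)
    (hc : c < 1) (hs : IsClosed s) {y x₀ : E} (hx₀ : x₀ ∈ s) (hmaps : Set.MapsTo (y + V ·) s s) :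
    ∃ x ∈ s, x = y + V x := by
  have hlip' : LipschitzOnWith c (y + V ·) s := fun a ha b hb => by
    simpa only [edist_add_left] using hlip ha hb
  obtain ⟨x, hx, hfix, -⟩ := ContractingWith.exists_fixedPoint' hs.isComplete hmaps
    ⟨hc, hlip'.mapsToRestrict hmaps⟩ hx₀ (edist_ne_top _ _)
  exact ⟨x, hx, hfix.symm⟩

variable {𝕜 G : Type*} [NontriviallyNormedField 𝕜] [NormedSpace 𝕜 E] [CompleteSpace E]
  [NormedAddCommGroup G] [NormedSpace 𝕜 G]

theorem AnalyticAt.exists_analyticAt_rightInverse {f : E → G} {a : E} {i : E ≃L[𝕜] G}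
    (hf : AnalyticAt 𝕜 f a) (hf' : fderiv 𝕜 f a = i) :
    ∃ g : G → E, AnalyticAt 𝕜 g (f a) ∧ g (f a) = a ∧ ∀ᶠ y in 𝓝 (f a), f (g y) = y := by
  have hs : HasStrictFDerivAt f (i : E →L[𝕜] G) a := hf' ▸ hf.hasStrictFDerivAt
  refine ⟨hs.localInverse f i a, ?_, hs.localInverse_apply_image, hs.eventually_right_inverse⟩
  have := (hs.toOpenPartialHomeomorph f).analyticAt_symm' hs.mem_toOpenPartialHomeomorph_source
    (by rwa [hs.toOpenPartialHomeomorph_coe]) (by rwa [hs.toOpenPartialHomeomorph_coe])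
  rwa [hs.toOpenPartialHomeomorph_coe] at this

theorem AnalyticAt.exists_analyticAt_rightInverse_id_sub {x : E}
    (hV : AnalyticAt 𝕜 V x) (hV' : ‖fderiv 𝕜 V x‖ < 1) :
    ∃ g : E → E, AnalyticAt 𝕜 g (x - V x) ∧ g (x - V x) = x ∧
      ∀ᶠ y in 𝓝 (x - V x), g y - V (g y) = y := by
  set i := ContinuousLinearEquiv.unitsEquiv 𝕜 E (Units.oneSub _ hV')
  have hderiv : fderiv 𝕜 (fun y => y - V y) x = i := by
    have h : HasFDerivAt (fun y => y - V y) (.id 𝕜 E - fderiv 𝕜 V x) x :=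
      (hasFDerivAt_id x).sub hV.differentiableAt.hasFDerivAt
    rw [h.fderiv]
    ext; simp [i]
  exact (analyticAt_id.sub hV).exists_analyticAt_rightInverse hderiv

theorem exists_analyticOn_eq_add_apply {r ρ : ℝ} (hρ : 0 ≤ ρ)
    (hV : AnalyticOnNhd 𝕜 V (ball 0 ρ)) (hlip : LipschitzOnWith c V (closedBall 0 ρ))
    (hc : c < 1) (hbound : ∀ x ∈ closedBall (0 : E) ρ, ‖V x‖ ≤ ρ - r) :
    ∃ F : E → E, AnalyticOn 𝕜 F (ball 0 r) ∧ (∀ y ∈ ball 0 r, F y = y + V (F y)) ∧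
      ∀ y ∈ ball 0 r, ∀ x ∈ closedBall 0 ρ, x = y + V x → F y = x := by
  have hmaps : ∀ y ∈ ball (0 : E) r, ∀ x ∈ closedBall (0 : E) ρ, y + V x ∈ ball (0 : E) ρ := by
    intro y hy x hx
    rw [mem_ball_zero_iff] at hy ⊢
    calc ‖y + V x‖ ≤ ‖y‖ + ‖V x‖ := norm_add_le _ _
      _ < r + (ρ - r) := add_lt_add_of_lt_of_le hy (hbound x hx)
      _ = ρ := by ring
  have hex : ∀ y ∈ ball (0 : E) r, ∃ x ∈ closedBall (0 : E) ρ, x = y + V x := fun y hy =>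
    hlip.exists_eq_add_apply hc isClosed_closedBall (mem_closedBall_self hρ)
      fun x hx => ball_subset_closedBall (hmaps y hy x hx)
  choose! F hFmem hFeq using hex
  have huniq : ∀ y ∈ ball (0 : E) r, ∀ x ∈ closedBall (0 : E) ρ, x = y + V x → F y = x :=
    fun y hy x hx h => hlip.eq_of_eq_add_apply hc (hFmem y hy) hx (hFeq y hy) h
  refine ⟨F, fun y₀ hy₀ => ?_, hFeq, huniq⟩
  have hx₀ : F y₀ ∈ ball (0 : E) ρ := by
    rw [hFeq y₀ hy₀]
    exact hmaps y₀ hy₀ _ (hFmem y₀ hy₀)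
  have hderiv : ‖fderiv 𝕜 V (F y₀)‖ < 1 :=
    (norm_fderiv_le_of_lipschitzOn 𝕜 (closedBall_mem_nhds_of_mem hx₀) hlip).trans_lt hc
  obtain ⟨g, hg, hgy₀, hgV⟩ := (hV _ hx₀).exists_analyticAt_rightInverse_id_sub hderiv
  rw [sub_eq_of_eq_add (hFeq y₀ hy₀)] at hg hgy₀ hgV
  have hgmem : ∀ᶠ y in 𝓝 y₀, g y ∈ ball (0 : E) ρ :=
    hg.continuousAt.preimage_mem_nhds (hgy₀ ▸ isOpen_ball.mem_nhds hx₀)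
  have hFg : F =ᶠ[𝓝 y₀] g := by
    filter_upwards [hgmem, hgV, isOpen_ball.mem_nhds hy₀] with y hgy hgVy hy
    exact huniq y hy _ (ball_subset_closedBall hgy) (eq_add_of_sub_eq hgVy)
  exact (hg.congr hFg.symm).analyticWithinAt

end FixedPoint

theorem Nat.multichoose_le_pow : ∀ n k : ℕ, n.multichoose k ≤ n ^ k
  | _, 0 => by simp
  | 0, k + 1 => by simp
  | n + 1, k + 1 => by
    have h₁ := multichoose_le_pow n (k + 1)
    have h₂ := multichoose_le_pow (n + 1) k
    have h₃ : n ^ k ≤ (n + 1) ^ k := Nat.pow_le_pow_left n.le_succ k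
    rw [pow_succ] at h₁
    rw [multichoose_succ_succ, pow_succ]
    nlinarith

section Monomials

variable {σ 𝕜 : Type*} [Fintype σ] [NormedField 𝕜]

theorem Finset.card_filter_degree_eq_le (s : Finset (σ →₀ ℕ)) (k : ℕ) :
    #{m ∈ s | m.degree = k} ≤ Fintype.card σ ^ k := by
  classical
  calc #{m ∈ s | m.degree = k} ≤ #(univ.finsuppAntidiag k) := by
        refine card_le_card fun m hm => ?_
        rw [mem_finsuppAntidiag, ← Finsupp.degree_eq_sum]
        exact ⟨(mem_filter.1 hm).2, subset_univ _⟩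
    _ = (Fintype.card σ).multichoose k := card_finsuppAntidiag_nat_eq_multichoose k
    _ ≤ Fintype.card σ ^ k := Nat.multichoose_le_pow _ _

theorem norm_prod_pow_le {x : σ → 𝕜} {t : ℝ} (hx : ‖x‖ ≤ t) (m : σ →₀ ℕ) :
    ‖∏ j, x j ^ m j‖ ≤ t ^ m.degree := by
  rw [norm_prod, Finsupp.degree_eq_sum, ← prod_pow_eq_pow_sum]
  gcongr with j
  rw [norm_pow]
  gcongr
  exact (norm_le_pi_norm x j).trans hx

-- Multiplied through by `t`, so that no exponent `k - 1` (truncated at `k = 0`) appears.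
theorem mul_norm_pow_sub_pow_le {a b : 𝕜} {t : ℝ} (ha : ‖a‖ ≤ t) (hb : ‖b‖ ≤ t) (k : ℕ) :
    t * ‖a ^ k - b ^ k‖ ≤ k * t ^ k * ‖a - b‖ := by
  have ht : 0 ≤ t := (norm_nonneg a).trans ha
  induction k with
  | zero => simp
  | succ k ih =>
    have hbk : ‖b‖ ^ k ≤ t ^ k := by gcongr
    calc t * ‖a ^ (k + 1) - b ^ (k + 1)‖ = t * ‖a * (a ^ k - b ^ k) + (a - b) * b ^ k‖ := by
          ring_nf
      _ ≤ ‖a‖ * (t * ‖a ^ k - b ^ k‖) + t * ‖a - b‖ * ‖b‖ ^ k := by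
          grw [norm_add_le, norm_mul, norm_mul, norm_pow]
          linarith
      _ ≤ t * (k * t ^ k * ‖a - b‖) + t * ‖a - b‖ * t ^ k := by gcongr
      _ = (k + 1 : ℕ) * t ^ (k + 1) * ‖a - b‖ := by push_cast; ring

theorem mul_norm_prod_pow_sub_prod_pow_le {x y : σ → 𝕜} {t : ℝ} (hx : ‖x‖ ≤ t) (hy : ‖y‖ ≤ t)
    (m : σ →₀ ℕ) :
    t * ‖∏ j, x j ^ m j - ∏ j, y j ^ m j‖ ≤ m.degree * t ^ m.degree * ‖x - y‖ := by
  classical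
  have ht : 0 ≤ t := (norm_nonneg x).trans hx
  have hxj j : ‖x j‖ ≤ t := (norm_le_pi_norm x j).trans hx
  have hyj j : ‖y j‖ ≤ t := (norm_le_pi_norm y j).trans hy
  suffices ∀ s : Finset σ, t * ‖∏ j ∈ s, x j ^ m j - ∏ j ∈ s, y j ^ m j‖ ≤
      (∑ j ∈ s, m j : ℕ) * t ^ (∑ j ∈ s, m j) * ‖x - y‖ by
    simpa only [Finsupp.degree_eq_sum] using this univ
  intro s
  induction s using Finset.induction_on with
  | empty => simp
  | insert a s ha ih =>
    have hxa : ‖x a ^ m a‖ ≤ t ^ m a := by rw [norm_pow]; gcongr; exact hxj a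
    have hys : ‖∏ j ∈ s, y j ^ m j‖ ≤ t ^ (∑ j ∈ s, m j) := by
      rw [norm_prod, ← prod_pow_eq_pow_sum]
      gcongr with j; rw [norm_pow]; gcongr; exact hyj j
    have hxya : t * ‖x a ^ m a - y a ^ m a‖ ≤ m a * t ^ m a * ‖x - y‖ :=
      (mul_norm_pow_sub_pow_le (hxj a) (hyj a) _).trans
        (by gcongr; exact norm_le_pi_norm (x - y) a)
    rw [prod_insert ha, prod_insert ha, sum_insert ha]
    calc t * ‖x a ^ m a * ∏ j ∈ s, x j ^ m j - y a ^ m a * ∏ j ∈ s, y j ^ m j‖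
        = t * ‖x a ^ m a * (∏ j ∈ s, x j ^ m j - ∏ j ∈ s, y j ^ m j)
            + (x a ^ m a - y a ^ m a) * ∏ j ∈ s, y j ^ m j‖ := by ring_nf
      _ ≤ ‖x a ^ m a‖ * (t * ‖∏ j ∈ s, x j ^ m j - ∏ j ∈ s, y j ^ m j‖)
            + t * ‖x a ^ m a - y a ^ m a‖ * ‖∏ j ∈ s, y j ^ m j‖ := by
          grw [norm_add_le, norm_mul, norm_mul]
          linarith
      _ ≤ t ^ m a * ((∑ j ∈ s, m j : ℕ) * t ^ (∑ j ∈ s, m j) * ‖x - y‖)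
            + m a * t ^ m a * ‖x - y‖ * t ^ (∑ j ∈ s, m j) := by gcongr
      _ = (m a + ∑ j ∈ s, m j : ℕ) * t ^ (m a + ∑ j ∈ s, m j) * ‖x - y‖ := by
          push_cast; ring

namespace MvPolynomial

theorem two_le_degree_of_mem_support {σ R : Type*} [CommSemiring R] {p : MvPolynomial σ R}
    (h0 : coeff 0 p = 0) (h1 : ∀ j, coeff (Finsupp.single j 1) p = 0) {m : σ →₀ ℕ}
    (hm : m ∈ p.support) : 2 ≤ m.degree := by
  classical
  rw [mem_support_iff] at hm
  by_contra! hlt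
  interval_cases hdeg : m.degree
  · exact hm (by rwa [(Finsupp.degree_eq_zero_iff m).1 hdeg])
  · have hcard : Multiset.card (Finsupp.toMultiset m) = 1 := by
      rw [Finsupp.card_toMultiset]; exact hdeg
    obtain ⟨j, hj⟩ := Multiset.card_eq_one.1 hcard
    have hmj := congrArg Multiset.toFinsupp hj
    rw [Finsupp.toMultiset_toFinsupp, Multiset.toFinsupp_singleton] at hmj
    exact hm (hmj ▸ h1 j)

variable {σ 𝕜 : Type*} [Fintype σ] [NormedField 𝕜]

theorem sum_support_le_sum_card_pow_mul {R : Type*} [CommSemiring R] {p : MvPolynomial σ R}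
    {D : Finset ℕ} (hD : ∀ m ∈ p.support, m.degree ∈ D) {w : ℕ → ℝ} (hw : ∀ k, 0 ≤ w k) :
    ∑ m ∈ p.support, w m.degree ≤ ∑ k ∈ D, (Fintype.card σ : ℝ) ^ k * w k := by
  classical
  rw [← sum_fiberwise_of_maps_to hD]
  gcongr with k
  rw [sum_congr rfl fun m hm => congrArg w (mem_filter.1 hm).2, sum_const, nsmul_eq_mul]
  gcongr
  · exact hw k
  · exact_mod_cast card_filter_degree_eq_le _ k

variable {p : MvPolynomial σ 𝕜} {N : ℝ} {D : Finset ℕ} {x y : σ → 𝕜} {t : ℝ}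

theorem norm_eval_le (hN : ∀ m, ‖coeff m p‖ ≤ N) (hD : ∀ m ∈ p.support, m.degree ∈ D)
    (hx : ‖x‖ ≤ t) : ‖eval x p‖ ≤ N * ∑ k ∈ D, (Fintype.card σ : ℝ) ^ k * t ^ k := by
  have hN0 : 0 ≤ N := (norm_nonneg _).trans (hN 0)
  have ht : 0 ≤ t := (norm_nonneg x).trans hx
  rw [eval_eq', mul_sum]
  calc ‖∑ m ∈ p.support, coeff m p * ∏ j, x j ^ m j‖
      ≤ ∑ m ∈ p.support, N * t ^ m.degree := by
        grw [norm_sum_le]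
        gcongr with m
        rw [norm_mul]
        gcongr
        exacts [hN m, norm_prod_pow_le hx m]
    _ ≤ ∑ k ∈ D, N * ((Fintype.card σ : ℝ) ^ k * t ^ k) := by
        rw [← mul_sum, ← mul_sum]
        gcongr
        exact sum_support_le_sum_card_pow_mul hD fun k => by positivity

theorem mul_norm_eval_sub_eval_le (hN : ∀ m, ‖coeff m p‖ ≤ N)
    (hD : ∀ m ∈ p.support, m.degree ∈ D) (hx : ‖x‖ ≤ t) (hy : ‖y‖ ≤ t) :
    t * ‖eval x p - eval y p‖ ≤
      N * (∑ k ∈ D, (Fintype.card σ : ℝ) ^ k * (k * t ^ k)) * ‖x - y‖ := by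
  have hN0 : 0 ≤ N := (norm_nonneg _).trans (hN 0)
  have ht : 0 ≤ t := (norm_nonneg x).trans hx
  rw [eval_eq', eval_eq', ← sum_sub_distrib]
  calc t * ‖∑ m ∈ p.support, (coeff m p * ∏ j, x j ^ m j - coeff m p * ∏ j, y j ^ m j)‖
      ≤ ∑ m ∈ p.support, N * (m.degree * t ^ m.degree * ‖x - y‖) := by
        grw [norm_sum_le, mul_sum]
        refine sum_le_sum fun m _ => ?_
        rw [← mul_sub, norm_mul, mul_left_comm]
        exact mul_le_mul (hN m) (mul_norm_prod_pow_sub_prod_pow_le hx hy m) (by positivity) hN0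
    _ = N * (∑ m ∈ p.support, (m.degree * t ^ m.degree : ℝ)) * ‖x - y‖ := by
        simp only [mul_sum, sum_mul, mul_assoc]
    _ ≤ N * (∑ k ∈ D, (Fintype.card σ : ℝ) ^ k * (k * t ^ k)) * ‖x - y‖ := by
        gcongr N * ?_ * _
        exact sum_support_le_sum_card_pow_mul (w := fun k => k * t ^ k) hD fun k => by positivity

end MvPolynomial

section PolynomialMap

variable {ι σ 𝕜 : Type*} [Fintype ι] [Fintype σ] [NormedField 𝕜] {V : ι → MvPolynomial σ 𝕜}
  {N : ℝ}

theorem MvPolynomial.lipschitzOnWith_eval_pi {D : Finset ℕ} (hN : ∀ i m, ‖coeff m (V i)‖ ≤ N)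
    (hD : ∀ i, ∀ m ∈ (V i).support, m.degree ∈ D) {ρ : ℝ} (hρ : 0 < ρ) {c : ℝ≥0}
    (hc : N * ∑ k ∈ D, (Fintype.card σ : ℝ) ^ k * (k * ρ ^ k) ≤ c * ρ) :
    LipschitzOnWith c (fun x i => eval x (V i)) (closedBall 0 ρ) := by
  refine LipschitzOnWith.of_dist_le_mul fun x hx y hy => ?_
  rw [mem_closedBall_zero_iff] at hx hy
  rw [dist_eq_norm, dist_eq_norm, pi_norm_le_iff_of_nonneg (by positivity)]
  intro i
  refine le_of_mul_le_mul_left ?_ hρ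
  calc ρ * ‖eval x (V i) - eval y (V i)‖
      ≤ N * (∑ k ∈ D, (Fintype.card σ : ℝ) ^ k * (k * ρ ^ k)) * ‖x - y‖ :=
        mul_norm_eval_sub_eval_le (hN i) (hD i) hx hy
    _ ≤ c * ρ * ‖x - y‖ := by gcongr
    _ = ρ * (c * ‖x - y‖) := by ring

theorem MvPolynomial.norm_eval_pi_le {d : ℕ} (hN : ∀ i m, ‖coeff m (V i)‖ ≤ N) (hN0 : 0 ≤ N)
    (hD : ∀ i, ∀ m ∈ (V i).support, m.degree ∈ Icc 2 d) {x : σ → 𝕜} {t : ℝ} (hx : ‖x‖ ≤ t) :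
    ‖fun i => eval x (V i)‖ ≤
      N * (∑ k ∈ Icc 2 d, (Fintype.card σ : ℝ) ^ k * (k * t ^ k)) / 2 := by
  have ht : 0 ≤ t := (norm_nonneg x).trans hx
  refine (pi_norm_le_iff_of_nonneg (by positivity)).2 fun i => ?_
  refine (norm_eval_le (hN i) (hD i) hx).trans ?_
  rw [mul_div_assoc, sum_div]
  gcongr with k hk
  have hk2 : (2 : ℝ) ≤ k := by exact_mod_cast (mem_Icc.1 hk).1
  have := mul_nonneg (pow_nonneg (Nat.cast_nonneg (Fintype.card σ)) k) (pow_nonneg ht k)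
  nlinarith

end PolynomialMap

theorem Nat.succ_mul_two_pow_mul_pow_le {n j d : ℕ} (hj : 1 ≤ j) (hjd : j + 1 ≤ d) :
    (j + 1) * 2 ^ j * n ^ (j + 1) ≤ ((2 * n) ^ d) ^ j := by
  rcases n.eq_zero_or_pos with rfl | hn
  · simp
  calc (j + 1) * 2 ^ j * n ^ (j + 1) ≤ 2 ^ j * 2 ^ j * n ^ (2 * j) := by
        have h₁ : j + 1 ≤ 2 ^ j := Nat.lt_two_pow_self
        have h₂ : n ^ (j + 1) ≤ n ^ (2 * j) := Nat.pow_le_pow_right hn (by omega)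
        gcongr
    _ = (2 * n) ^ (2 * j) := by ring
    _ ≤ (2 * n) ^ (d * j) := Nat.pow_le_pow_right (by omega) (by nlinarith)
    _ = ((2 * n) ^ d) ^ j := pow_mul _ _ _

theorem pow_mul_two_mul_pow_le {n d k : ℕ} (hk : k ∈ Icc 2 d) {N r : ℝ} (hN : 0 ≤ N)
    (hr : r = 1 / ((2 * n) ^ d * (1 + N))) :
    (n : ℝ) ^ k * (k * (2 * r) ^ k) ≤ 2 * r * (1 + N)⁻¹ ^ (k - 1) := by
  obtain ⟨j, rfl⟩ : ∃ j, k = j + 1 := ⟨k - 1, by grind⟩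
  rw [mem_Icc] at hk
  have hcount : ((j + 1) * 2 ^ j * n ^ (j + 1) : ℝ) ≤ (((2 * n) ^ d) ^ j : ℝ) := by
    exact_mod_cast Nat.succ_mul_two_pow_mul_pow_le (n := n) (by omega) hk.2
  have hr0 : 0 ≤ r := by rw [hr]; positivity
  rw [one_div, mul_inv] at hr
  rw [add_tsub_cancel_right]
  calc (n : ℝ) ^ (j + 1) * ((j + 1 : ℕ) * (2 * r) ^ (j + 1))
      = 2 * r * (((j + 1) * 2 ^ j * n ^ (j + 1) : ℝ) / ((2 * n) ^ d) ^ j) * (1 + N)⁻¹ ^ j := by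
        generalize (2 * (n : ℝ)) ^ d = Q at hr ⊢
        generalize (1 + N)⁻¹ = u at hr ⊢
        subst hr
        push_cast
        ring
    _ ≤ 2 * r * 1 * (1 + N)⁻¹ ^ j := by
        gcongr
        exact div_le_one_of_le₀ hcount (by positivity)
    _ = 2 * r * (1 + N)⁻¹ ^ j := by rw [mul_one]

theorem mul_sum_Icc_inv_one_add_pow {N : ℝ} (hN : 0 ≤ N) (d : ℕ) :
    N * ∑ k ∈ Icc 2 d, (1 + N)⁻¹ ^ (k - 1) = 1 - (1 + N)⁻¹ ^ (d - 1) := by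
  induction d with
  | zero => simp
  | succ d ih =>
    rcases d.eq_zero_or_pos with rfl | hd
    · simp
    rw [sum_Icc_succ_top (by omega), mul_add, ih, add_tsub_cancel_right,
      show d = d - 1 + 1 by omega, add_tsub_cancel_right, pow_succ]
    field_simp
    ring

theorem exists_lt_one_mul_sum_Icc_le (n d : ℕ) {N r : ℝ} (hN : 0 ≤ N)
    (hr : r = 1 / ((2 * n) ^ d * (1 + N))) :
    ∃ c : ℝ≥0, c < 1 ∧ N * ∑ k ∈ Icc 2 d, (n : ℝ) ^ k * (k * (2 * r) ^ k) ≤ c * (2 * r) := by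
  have hu : 0 < (1 + N)⁻¹ := by positivity
  have hu1 : (1 + N)⁻¹ ≤ 1 := inv_le_one_of_one_le₀ (by linarith)
  refine ⟨⟨1 - (1 + N)⁻¹ ^ (d - 1), sub_nonneg.2 (pow_le_one₀ hu.le hu1)⟩,
    NNReal.coe_lt_coe.1 (sub_lt_self _ (pow_pos hu _)), ?_⟩
  calc N * ∑ k ∈ Icc 2 d, (n : ℝ) ^ k * (k * (2 * r) ^ k)
      ≤ N * ∑ k ∈ Icc 2 d, 2 * r * (1 + N)⁻¹ ^ (k - 1) :=
        mul_le_mul_of_nonneg_left (sum_le_sum fun k hk => pow_mul_two_mul_pow_le hk hN hr) hN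
    _ = (1 - (1 + N)⁻¹ ^ (d - 1)) * (2 * r) := by
        rw [← mul_sum, mul_left_comm, mul_sum_Icc_inv_one_add_pow hN, mul_comm]

theorem norm_coeff_le_coeffNorm {n : ℕ} (V : Fin n → MvPolynomial (Fin n) ℂ) (i : Fin n)
    (m : Fin n →₀ ℕ) : ‖coeff m (V i)‖ ≤ coeffNorm V := by
  refine le_csSup (Set.Finite.bddAbove ?_) ⟨i, m, rfl⟩
  refine ((Set.finite_iUnion fun i => (V i).support.finite_toSet.image
    fun m => ‖coeff m (V i)‖).insert 0).subset ?_
  rintro _ ⟨i, m, rfl⟩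
  by_cases hm : m ∈ (V i).support
  · exact Or.inr (Set.mem_iUnion.2 ⟨i, m, hm, rfl⟩)
  · simp [notMem_support_iff.1 hm]

theorem coeffNorm_nonneg {n : ℕ} (V : Fin n → MvPolynomial (Fin n) ℂ) : 0 ≤ coeffNorm V :=
  Real.sSup_nonneg fun _ ⟨_, _, h⟩ => h ▸ norm_nonneg _

theorem analytic_local_inverse_general (n d : ℕ) (hn : 1 ≤ n)
    (V : Fin n → MvPolynomial (Fin n) ℂ)
    (hdeg : ∀ i, (V i).totalDegree ≤ d)
    (hV0 : ∀ i, MvPolynomial.coeff 0 (V i) = 0)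
    (hV1 : ∀ i j, MvPolynomial.coeff (Finsupp.single j 1) (V i) = 0) :
    ∃ F : (Fin n → ℂ) → (Fin n → ℂ),
      AnalyticOn ℂ F {y : Fin n → ℂ | ‖y‖ < 1 / ((2 * n) ^ d * (1 + coeffNorm V))} ∧
      F 0 = 0 ∧
      ∀ y ∈ {y : Fin n → ℂ | ‖y‖ < 1 / ((2 * n) ^ d * (1 + coeffNorm V))},
        F y = fun i => y i + MvPolynomial.eval (F y) (V i) := by
  set r : ℝ := 1 / ((2 * n) ^ d * (1 + coeffNorm V))
  have hr0 : 0 < r := by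
    have : (0 : ℝ) < n := by exact_mod_cast hn
    have := coeffNorm_nonneg V
    positivity
  have hN := norm_coeff_le_coeffNorm V
  have hD : ∀ i, ∀ m ∈ (V i).support, m.degree ∈ Icc 2 d := fun i m hm =>
    mem_Icc.2 ⟨two_le_degree_of_mem_support (hV0 i) (hV1 i) hm,
      (le_totalDegree hm).trans (hdeg i)⟩
  obtain ⟨c, hc, hS⟩ := exists_lt_one_mul_sum_Icc_le (Fintype.card (Fin n)) d
    (coeffNorm_nonneg V) (by rw [Fintype.card_fin])
  have hbound : ∀ x ∈ closedBall (0 : Fin n → ℂ) (2 * r), ‖fun i => eval x (V i)‖ ≤ 2 * r - r :=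
    fun x hx => calc
      _ ≤ _ := norm_eval_pi_le hN (coeffNorm_nonneg V) hD (mem_closedBall_zero_iff.1 hx)
      _ ≤ c * (2 * r) / 2 := by gcongr
      _ ≤ 2 * r - r := by nlinarith [(NNReal.coe_le_one (r := c)).2 hc.le]
  obtain ⟨F, hF, hFeq, huniq⟩ := exists_analyticOn_eq_add_apply (𝕜 := ℂ) (by positivity)
    (fun x _ => .pi fun i => AnalyticOnNhd.eval_mvPolynomial (V i) x trivial)
    (lipschitzOnWith_eval_pi hN hD (by positivity) hS) hc hbound
  have hball : ball (0 : Fin n → ℂ) r = {y | ‖y‖ < r} := by ext; simp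
  refine ⟨F, hball ▸ hF, huniq 0 (mem_ball_self hr0) 0 (mem_closedBall_self (by positivity)) ?_,
    fun y hy => hFeq y (hball ▸ hy)⟩
  ext i
  simp [eval_zero, constantCoeff_eq, hV0 i]

/-- The fixed-point equation `F(y) = y + V(F(y))` has an analytic solution with `F(0) = 0`
on the ball `‖y‖_∞ < 1 / ((2n)^d (1 + ‖V‖))`; in particular `F` is a local analytic
inverse of `x ↦ x - V(x)`. -/
theorem analytic_local_inverse (n d : ℕ) (hn : 1 ≤ n) (hd : 2 ≤ d)
    (V : Fin n → MvPolynomial (Fin n) ℂ)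
    (hdeg : ∀ i, (V i).totalDegree ≤ d)
    (hV0 : ∀ i, MvPolynomial.coeff 0 (V i) = 0)
    (hV1 : ∀ i j, MvPolynomial.coeff (Finsupp.single j 1) (V i) = 0) :
    ∃ F : (Fin n → ℂ) → (Fin n → ℂ),
      AnalyticOn ℂ F {y : Fin n → ℂ | ‖y‖ < 1 / ((2 * n) ^ d * (1 + coeffNorm V))} ∧
      F 0 = 0 ∧
      ∀ y ∈ {y : Fin n → ℂ | ‖y‖ < 1 / ((2 * n) ^ d * (1 + coeffNorm V))},
        F y = fun i => y i + MvPolynomial.eval (F y) (V i) :=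
  analytic_local_inverse_general n d hn V hdeg hV0 hV1
end Monomials
end

section
/- Let n ≥ 1 and let V : Fin n → MvPolynomial (Fin n) ℂ be a polynomial map with V(0) = 0 and V'(0) = 0. Then there exists a unique family of formal power series F : Fin n → MvPowerSeries (Fin n) ℂ, each with zero constant coefficient, satisfying the fixed-point equation F i = X i + (V i substituted with F) for every i, where the substitution replaces the variable X j in V i by the power series F j. -/
/-!
The map `Φ(G) = X + V(G)` is a contraction for the order of vanishing: since `V` has no
monomials of degree `< 2`, if `G` and `G'` have zero constant terms and `G - G'` vanishes to
order `N`, then in a product of `k ≥ 2` of their entries the difference vanishes to order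
`N + k - 1 ≥ N + 1`. Hence the iterates `Φ^[k] 0` converge coefficientwise to a fixed point,
and two fixed points agree to every order.
-/

open MvPowerSeries

theorem Finsupp.prod_pow_eq_prod_toMultiset_map {τ M : Type*} [CommMonoid M] (m : τ →₀ ℕ)
    (G : τ → M) : (m.prod fun j k => G j ^ k) = (m.toMultiset.map G).prod := by
  rw [Finsupp.toMultiset_map, Finsupp.prod_toMultiset,
    Finsupp.prod_mapDomain_index (fun _ => pow_zero _) (fun _ => pow_add _)]

theorem Finsupp.card_toMultiset_eq_degree {τ : Type*} (m : τ →₀ ℕ) :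
    Multiset.card m.toMultiset = m.degree := by
  simp [Finsupp.degree_apply, Finsupp.sum]

theorem Finsupp.exists_eq_single_of_degree_eq_one {τ : Type*} {m : τ →₀ ℕ} (h : m.degree = 1) :
    ∃ j, m = Finsupp.single j 1 := by
  rw [← Finsupp.card_toMultiset_eq_degree, Multiset.card_eq_one] at h
  classical
  obtain ⟨j, hj⟩ := h
  exact ⟨j, by rw [Finsupp.toMultiset_eq_iff.mp hj, Multiset.toFinsupp_singleton]⟩

theorem MvPolynomial.two_le_degree_of_mem_support_s3 {τ R : Type*} [CommSemiring R]
    {p : MvPolynomial τ R} (h0 : p.coeff 0 = 0) (h1 : ∀ j, p.coeff (Finsupp.single j 1) = 0)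
    {m : τ →₀ ℕ} (hm : m ∈ p.support) : 2 ≤ m.degree := by
  rw [MvPolynomial.mem_support_iff] at hm
  by_contra! hlt
  interval_cases hd : m.degree
  · exact hm (by rw [(Finsupp.degree_eq_zero_iff m).mp hd, h0])
  · obtain ⟨j, rfl⟩ := Finsupp.exists_eq_single_of_degree_eq_one hd
    exact hm (h1 j)

namespace MvPowerSeries

variable {σ R : Type*} [CommRing R]

theorem order_sub_comm (f g : MvPowerSeries σ R) : (f - g).order = (g - f).order := by
  rw [← order_neg, neg_sub]

theorem le_order_sub_trans {f g h : MvPowerSeries σ R} {a : ℕ∞} (hfg : a ≤ (f - g).order)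
    (hgh : a ≤ (g - h).order) : a ≤ (f - h).order := by
  rw [← sub_add_sub_cancel f g h]
  exact (le_min hfg hgh).trans min_order_le_add

theorem eq_of_forall_le_order_sub {f g : MvPowerSeries σ R} (h : ∀ k : ℕ, k ≤ (f - g).order) :
    f = g :=
  sub_eq_zero.mp (order_eq_top_iff.mp (ENat.eq_top_iff_forall_ge.mpr h))

theorem card_le_order_prod_map {ι : Type*} {s : Multiset ι} {f : ι → MvPowerSeries σ R}
    (hf : ∀ i ∈ s, 1 ≤ (f i).order) : (Multiset.card s : ℕ∞) ≤ (s.map f).prod.order := by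
  induction s using Multiset.induction_on with
  | empty => simp
  | cons a s ih =>
    rw [Multiset.map_cons, Multiset.prod_cons, Multiset.card_cons, Nat.cast_add, Nat.cast_one,
      add_comm]
    exact (add_le_add (hf a (Multiset.mem_cons_self a s))
      (ih fun i hi => hf i (Multiset.mem_cons_of_mem hi))).trans le_order_mul

/-- The bound is `N + card s - 1`, written without truncated subtraction. -/
theorem le_order_prod_map_sub_prod_map {ι : Type*} {s : Multiset ι} (hs : s ≠ 0)
    {f g : ι → MvPowerSeries σ R} {N : ℕ∞} (hf : ∀ i ∈ s, 1 ≤ (f i).order)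
    (hg : ∀ i ∈ s, 1 ≤ (g i).order) (hfg : ∀ i ∈ s, N ≤ (f i - g i).order) :
    N + Multiset.card s ≤ ((s.map f).prod - (s.map g).prod).order + 1 := by
  induction s using Multiset.induction_on with
  | empty => exact absurd rfl hs
  | cons a s ih =>
    rcases eq_or_ne s 0 with rfl | hs'
    · simpa using add_le_add_left (hfg a (Multiset.mem_singleton_self a)) 1
    simp only [Multiset.forall_mem_cons] at hf hg hfg
    set P := (s.map f).prod
    set Q := (s.map g).prod
    have hPQ : N + Multiset.card s ≤ (P - Q).order + 1 := ih hs' hf.2 hg.2 hfg.2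
    have hsplit : f a * P - g a * Q = (f a - g a) * P + g a * (P - Q) := by ring
    rw [Multiset.map_cons, Multiset.map_cons, Multiset.prod_cons, Multiset.prod_cons, hsplit,
      Multiset.card_cons, Nat.cast_add, Nat.cast_one, ← add_assoc]
    refine add_le_add_left ((le_min ?_ ?_).trans min_order_le_add) 1
    · exact (add_le_add hfg.1 (card_le_order_prod_map hf.2)).trans le_order_mul
    · exact (hPQ.trans (by rw [add_comm]; exact add_le_add_left hg.1 _)).trans le_order_mul

theorem le_order_aeval_sub_aeval {τ : Type*} {p : MvPolynomial τ R}
    (hp : ∀ m ∈ p.support, 2 ≤ m.degree) {G G' : τ → MvPowerSeries σ R}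
    (hG : ∀ j, constantCoeff (G j) = 0) (hG' : ∀ j, constantCoeff (G' j) = 0) {N : ℕ∞}
    (hGG' : ∀ j, N ≤ (G j - G' j).order) :
    N + 1 ≤ (MvPolynomial.aeval G p - MvPolynomial.aeval G' p).order := by
  rw [p.as_sum, map_sum, map_sum, ← Finset.sum_sub_distrib]
  refine Finset.sum_induction _ (fun f : MvPowerSeries σ R => N + 1 ≤ f.order)
    (fun f g hf hg => (le_min hf hg).trans min_order_le_add) (by simp) fun m hm => ?_
  have hcard : 2 ≤ Multiset.card m.toMultiset := by
    rw [Finsupp.card_toMultiset_eq_degree]; exact hp m hm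
  have hprod := le_order_prod_map_sub_prod_map (s := m.toMultiset)
    (Multiset.card_pos.mp (by omega)) (fun j _ => one_le_order_iff_constCoeff_eq_zero.mpr (hG j))
    (fun j _ => one_le_order_iff_constCoeff_eq_zero.mpr (hG' j)) (fun j _ => hGG' j)
  rw [MvPolynomial.aeval_monomial, MvPolynomial.aeval_monomial, ← mul_sub,
    Finsupp.prod_pow_eq_prod_toMultiset_map, Finsupp.prod_pow_eq_prod_toMultiset_map]
  refine le_trans ?_ (le_add_self.trans le_order_mul)
  refine (ENat.add_le_add_iff_right ENat.one_ne_top).mp (le_trans ?_ hprod)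
  rw [add_assoc]
  exact add_le_add_right (by exact_mod_cast hcard) N

theorem le_order_sub_of_le {u : ℕ → MvPowerSeries σ R}
    (hu : ∀ k : ℕ, (k : ℕ∞) ≤ (u (k + 1) - u k).order) {k l : ℕ} (hkl : k ≤ l) :
    (k : ℕ∞) ≤ (u l - u k).order := by
  induction l, hkl using Nat.le_induction with
  | base => simp
  | succ l hkl ih => exact le_order_sub_trans ((Nat.cast_le.mpr hkl).trans (hu l)) ih

/-- Completeness: the limit is read off coefficientwise, the coefficient of `X ^ d` having
stabilised from index `degree d + 1` on. -/
theorem exists_le_order_sub_of_le_order_succ_sub (u : ℕ → MvPowerSeries σ R)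
    (hu : ∀ k : ℕ, (k : ℕ∞) ≤ (u (k + 1) - u k).order) :
    ∃ F : MvPowerSeries σ R, ∀ k : ℕ, (k : ℕ∞) ≤ (u k - F).order := by
  let F : MvPowerSeries σ R := fun d => coeff d (u (d.degree + 1))
  refine ⟨F, fun k => nat_le_order fun d hd => ?_⟩
  have hFd : coeff d F = coeff d (u (d.degree + 1)) := rfl
  have hstable := le_order_sub_of_le hu (Nat.succ_le_of_lt hd)
  rw [map_sub, hFd, ← map_sub]
  exact coeff_of_lt_order ((Nat.cast_lt.mpr (Nat.lt_succ_self _)).trans_le hstable)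

def IsOrderContraction {ι : Type*} (Φ : (ι → MvPowerSeries σ R) → ι → MvPowerSeries σ R) :
    Prop :=
  ∀ (N : ℕ) (G G' : ι → MvPowerSeries σ R), (∀ i, constantCoeff (G i) = 0) →
    (∀ i, constantCoeff (G' i) = 0) → (∀ i, (N : ℕ∞) ≤ (G i - G' i).order) →
    ∀ i, (N + 1 : ℕ∞) ≤ (Φ G i - Φ G' i).order

namespace IsOrderContraction

variable {ι : Type*} {Φ : (ι → MvPowerSeries σ R) → ι → MvPowerSeries σ R}

theorem constantCoeff_eq_zero (hΦ : IsOrderContraction Φ)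
    (hΦ0 : ∀ i, constantCoeff (Φ 0 i) = 0) {G : ι → MvPowerSeries σ R}
    (hG : ∀ i, constantCoeff (G i) = 0) (i : ι) : constantCoeff (Φ G i) = 0 := by
  have h := one_le_order_iff_constCoeff_eq_zero.mp
    (by simpa using hΦ 0 G 0 hG (by simp) (by simp) i)
  rwa [map_sub, hΦ0, sub_zero] at h

theorem eq_of_isFixedPt (hΦ : IsOrderContraction Φ) {F F' : ι → MvPowerSeries σ R}
    (hF : ∀ i, constantCoeff (F i) = 0) (hF' : ∀ i, constantCoeff (F' i) = 0)
    (hFΦ : ∀ i, F i = Φ F i) (hF'Φ : ∀ i, F' i = Φ F' i) : F = F' := by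
  have hclose : ∀ (N : ℕ) i, (N : ℕ∞) ≤ (F i - F' i).order := by
    intro N
    induction N with
    | zero => simp
    | succ N ih =>
      intro i
      rw [hFΦ i, hF'Φ i]
      exact_mod_cast hΦ N F F' hF hF' ih i
  exact funext fun i => eq_of_forall_le_order_sub fun N => hclose N i

theorem exists_isFixedPt (hΦ : IsOrderContraction Φ) (hΦ0 : ∀ i, constantCoeff (Φ 0 i) = 0) :
    ∃ F : ι → MvPowerSeries σ R, (∀ i, constantCoeff (F i) = 0) ∧ ∀ i, F i = Φ F i := by
  let u : ℕ → ι → MvPowerSeries σ R := fun k => Φ^[k] 0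
  have hu_succ : ∀ k, u (k + 1) = Φ (u k) := fun k => Function.iterate_succ_apply' Φ k 0
  have hu_coeff : ∀ k i, constantCoeff (u k i) = 0 := by
    intro k
    induction k with
    | zero => simp [u]
    | succ k ih => rw [hu_succ]; exact hΦ.constantCoeff_eq_zero hΦ0 ih
  have hu : ∀ i (k : ℕ), (k : ℕ∞) ≤ (u (k + 1) i - u k i).order := by
    intro i k
    induction k generalizing i with
    | zero => simp
    | succ k ih =>
      have h := hΦ k _ _ (hu_coeff _) (hu_coeff _) ih i
      rw [← hu_succ, ← hu_succ] at h
      exact_mod_cast h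
  choose F hF using fun i => exists_le_order_sub_of_le_order_succ_sub (fun k => u k i) (hu i)
  have hF_coeff : ∀ i, constantCoeff (F i) = 0 := fun i => by
    have h := one_le_order_iff_constCoeff_eq_zero.mp (by exact_mod_cast hF i 1)
    rwa [map_sub, hu_coeff, zero_sub, neg_eq_zero] at h
  refine ⟨F, hF_coeff, fun i => eq_of_forall_le_order_sub fun k => ?_⟩
  refine le_order_sub_trans (g := u (k + 1) i) ?_ ?_
  · rw [order_sub_comm]; exact (Nat.cast_le.mpr k.le_succ).trans (hF i (k + 1))
  · rw [hu_succ]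
    exact le_self_add.trans (hΦ k _ _ (hu_coeff k) hF_coeff (hF · k) i)

theorem existsUnique_isFixedPt (hΦ : IsOrderContraction Φ)
    (hΦ0 : ∀ i, constantCoeff (Φ 0 i) = 0) :
    ∃! F : ι → MvPowerSeries σ R, (∀ i, constantCoeff (F i) = 0) ∧ ∀ i, F i = Φ F i := by
  obtain ⟨F, hF⟩ := hΦ.exists_isFixedPt hΦ0
  exact ⟨F, hF, fun F' hF' => hΦ.eq_of_isFixedPt hF'.1 hF.1 hF'.2 hF.2⟩

end IsOrderContraction

end MvPowerSeries

theorem formal_fixed_point_exists_unique_general (n : ℕ)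
    (V : Fin n → MvPolynomial (Fin n) ℂ)
    (hV0 : ∀ i, MvPolynomial.coeff 0 (V i) = 0)
    (hV1 : ∀ i j, MvPolynomial.coeff (Finsupp.single j 1) (V i) = 0) :
    ∃! F : Fin n → MvPowerSeries (Fin n) ℂ,
      (∀ i, MvPowerSeries.constantCoeff (F i) = 0) ∧
      (∀ i, F i = MvPowerSeries.X i + MvPolynomial.aeval F (V i)) := by
  refine IsOrderContraction.existsUnique_isFixedPt
    (Φ := fun G i => X i + MvPolynomial.aeval G (V i)) ?_ fun i => ?_
  · intro N G G' hG hG' hGG' i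
    rw [add_sub_add_left_eq_sub]
    exact le_order_aeval_sub_aeval
      (fun _ => MvPolynomial.two_le_degree_of_mem_support_s3 (hV0 i) (hV1 i)) hG hG' hGG'
  · simp [MvPolynomial.aeval_zero, MvPolynomial.constantCoeff_eq, hV0 i]

/-- **Existence and uniqueness of the formal inverse.** If `V(0) = 0` and `V'(0) = 0`, then
there is a unique family `F` of formal power series with zero constant coefficient
satisfying the fixed-point equation `F i = X i + V i (F)`, where the substitution of the
family `F` into the polynomial `V i` is polynomial evaluation (`MvPolynomial.aeval`) in the
ring of formal power series, which agrees with power-series substitution since each `F j`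
has zero constant coefficient. -/
theorem formal_fixed_point_exists_unique (n : ℕ) (hn : 1 ≤ n)
    (V : Fin n → MvPolynomial (Fin n) ℂ)
    (hV0 : ∀ i, MvPolynomial.coeff 0 (V i) = 0)
    (hV1 : ∀ i j, MvPolynomial.coeff (Finsupp.single j 1) (V i) = 0) :
    ∃! F : Fin n → MvPowerSeries (Fin n) ℂ,
      (∀ i, MvPowerSeries.constantCoeff (F i) = 0) ∧
      (∀ i, F i = MvPowerSeries.X i + MvPolynomial.aeval F (V i)) :=
  formal_fixed_point_exists_unique_general n V hV0 hV1
end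

section
/- Let n ≥ 1 and let l be a finite list with values in Fin n such that between any two equal entries there is a strictly smaller entry: whenever i < j are positions with l(i) = l(j), there exists a position k with i < k < j and l(k) < l(i). Then the length of l is at most 2^n - 1. -/
/-!
A minimal entry `m` of a separated list can occur only once, since nothing strictly smaller could
stand between two of its occurrences. Cutting the list at `m` leaves two separated lists whose
values avoid `m`, so by induction on the set of values `s`, the length is at most
`2 * (2 ^ (#s - 1) - 1) + 1 = 2 ^ #s - 1`.
-/

namespace List

variable {α : Type*} [LinearOrder α]

def SeparatedBySmaller (l : List α) : Prop :=
  ∀ x u, x :: u ++ [x] <:+: l → ∃ y ∈ u, y < x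

theorem separatedBySmaller_of_forall_get {l : List α}
    (h : ∀ i j : Fin l.length, (i : ℕ) < (j : ℕ) → l.get i = l.get j →
      ∃ k : Fin l.length, (i : ℕ) < (k : ℕ) ∧ (k : ℕ) < (j : ℕ) ∧ l.get k < l.get i) :
    l.SeparatedBySmaller := by
  rintro x u ⟨s, t, rfl⟩
  have hlen : (s ++ (x :: u ++ [x]) ++ t).length = s.length + u.length + 2 + t.length := by
    simp only [cons_append, append_assoc, nil_append, length_append, length_cons]; omega
  obtain ⟨k, hik, hkj, hlt⟩ := h ⟨s.length, by omega⟩ ⟨s.length + u.length + 1, by omega⟩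
    (by simp) (by grind)
  have hk : k - s.length - 1 < u.length := by simp only at hkj hik; omega
  exact ⟨u[k - s.length - 1], getElem_mem hk, by grind⟩

namespace SeparatedBySmaller

theorem of_infix {l l' : List α} (hl : l'.SeparatedBySmaller) (h : l <:+: l') :
    l.SeparatedBySmaller :=
  fun x u hu => hl x u (hu.trans h)

theorem not_infix_of_forall_le {l : List α} {m : α} (hl : l.SeparatedBySmaller)
    (hm : ∀ x ∈ l, m ≤ x) (u : List α) : ¬ m :: u ++ [m] <:+: l := fun hu =>
  let ⟨y, hy, hlt⟩ := hl m u hu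
  (hm y (hu.subset (by simp [hy]))).not_gt hlt

theorem length_le_two_pow_card_sub_one {l : List α} (hl : l.SeparatedBySmaller) (s : Finset α)
    (hs : ∀ x ∈ l, x ∈ s) : l.length ≤ 2 ^ s.card - 1 := by
  induction s using Finset.strongInduction generalizing l with
  | H s ih =>
  rcases eq_or_ne l [] with rfl | hne
  · simp
  obtain ⟨m, hm, hmin⟩ := l.toFinset.exists_min_image id (by simpa using hne)
  obtain ⟨a, b, rfl⟩ := append_of_mem (mem_toFinset.1 hm)
  simp only [mem_toFinset, id] at hmin
  have hma : m ∉ a := fun hma => by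
    obtain ⟨a₁, a₂, rfl⟩ := append_of_mem hma
    exact hl.not_infix_of_forall_le hmin a₂ (by simpa using infix_append a₁ (m :: a₂ ++ [m]) b)
  have hmb : m ∉ b := fun hmb => by
    obtain ⟨b₁, b₂, rfl⟩ := append_of_mem hmb
    exact hl.not_infix_of_forall_le hmin b₁ (by simpa using infix_append a (m :: b₁ ++ [m]) b₂)
  have hsub : s.erase m ⊂ s := Finset.erase_ssubset (hs m (by simp))
  have ha := ih _ hsub (hl.of_infix (prefix_append a (m :: b)).isInfix)
    (fun x hx => Finset.mem_erase.2 ⟨ne_of_mem_of_not_mem hx hma, hs x (by simp [hx])⟩)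
  have hb := ih _ hsub (hl.of_infix (by simpa using infix_append (a ++ [m]) b []))
    (fun x hx => Finset.mem_erase.2 ⟨ne_of_mem_of_not_mem hx hmb, hs x (by simp [hx])⟩)
  have hcard := Finset.card_erase_add_one (hs m (by simp))
  rw [← hcard, pow_succ, length_append, length_cons]
  have := Nat.one_le_two_pow (n := (s.erase m).card)
  omega

end SeparatedBySmaller

end List

theorem length_le_of_separated_general (n : ℕ) (l : List (Fin n))
    (h : ∀ i j : Fin l.length, (i : ℕ) < (j : ℕ) → l.get i = l.get j →
      ∃ k : Fin l.length, (i : ℕ) < (k : ℕ) ∧ (k : ℕ) < (j : ℕ) ∧ l.get k < l.get i) :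
    l.length ≤ 2 ^ n - 1 := by
  simpa using (List.separatedBySmaller_of_forall_get h).length_le_two_pow_card_sub_one
    Finset.univ (by simp)

/-- If in a list with values in `Fin n`, any two equal entries are separated by a strictly
smaller entry, then the list has length at most `2 ^ n - 1`. -/
theorem length_le_of_separated (n : ℕ) (hn : 1 ≤ n) (l : List (Fin n))
    (h : ∀ i j : Fin l.length, (i : ℕ) < (j : ℕ) → l.get i = l.get j →
      ∃ k : Fin l.length, (i : ℕ) < (k : ℕ) ∧ (k : ℕ) < (j : ℕ) ∧ l.get k < l.get i) :
    l.length ≤ 2 ^ n - 1 :=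
  length_le_of_separated_general n l h
end
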